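/- In a DAG with edges in topological order, for any assignment y ∈ {0,1}^{1..i+1} with y_{i+1} = 1 whose selected edges form a simple path from the source s to vertex v in D^{i+1}, writing e_{i+1} = (u, v): if u = s then y_{1..i} is the all-zero vector, and if u ≠ s then the selected edges of y_{1..i} form a simple path from s to u in D^i. -/

import Mathlib

variable {V : Type*}

/-- A list of edge indices forms a directed walk from `s` to `t`
(edges are given by the enumeration `e : ℕ → V × V`). -/
def IsPath (e : ℕ → V × V) : V → V → List ℕ → Prop
  | s, t, [] => s = t
  | s, t, j :: l => (e j).1 = s ∧ IsPath e (e j).2 t l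

/-- A simple path: a directed walk visiting no vertex twice. -/
def IsSimplePath (e : ℕ → V × V) (s t : V) (l : List ℕ) : Prop :=
  IsPath e s t l ∧ (s :: l.map fun j => (e j).2).Nodup

/-- The enumeration `e 0, …, e (k-1)` of edges is topological: along any
directed path, edge indices strictly increase. -/
def TopoSorted (k : ℕ) (e : ℕ → V × V) : Prop :=
  ∀ u w : V, ∀ l : List ℕ, (∀ j ∈ l, j < k) → IsPath e u w l → l.Chain' (· < ·)

/-- The graph with edges `e 0, …, e (k-1)` is acyclic. -/
def Acyclic (k : ℕ) (e : ℕ → V × V) : Prop :=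
  ∀ v : V, ∀ l : List ℕ, l ≠ [] → (∀ j ∈ l, j < k) → ¬ IsPath e v v l

/-- `s` is the unique source: it has no incoming edge and every other
vertex of the graph has an incoming edge. -/
def UniqueSource (k : ℕ) (e : ℕ → V × V) (s : V) : Prop :=
  (∀ j < k, (e j).2 ≠ s) ∧
    ∀ v, v ≠ s → (∃ j, j < k ∧ ((e j).1 = v ∨ (e j).2 = v)) → ∃ j, j < k ∧ (e j).2 = v

/-- `t` is the unique target: it has no outgoing edge and every other
vertex of the graph has an outgoing edge. -/
def UniqueTarget (k : ℕ) (e : ℕ → V × V) (t : V) : Prop :=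
  (∀ j < k, (e j).1 ≠ t) ∧
    ∀ v, v ≠ t → (∃ j, j < k ∧ ((e j).1 = v ∨ (e j).2 = v)) → ∃ j, j < k ∧ (e j).1 = v

/-- Distinct indices below `k` enumerate distinct edges. -/
def EdgeInj (k : ℕ) (e : ℕ → V × V) : Prop :=
  ∀ i, i < k → ∀ j, j < k → e i = e j → i = j

/-- The assignment `y`, restricted to its first `i` bits, selects a set of
edges forming a simple path `s → v` in the subgraph `D^i` of the first `i`
edges. -/
def Represents (e : ℕ → V × V) (s v : V) (i : ℕ) (y : ℕ → Bool) : Prop :=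
  ∃ l : List ℕ, IsSimplePath e s v l ∧ ∀ j, j ∈ l ↔ (j < i ∧ y j = true)

/-- The recursive circuit `C_v^i` (levels are 1-based, bit `y j` corresponds
to the edge `e j`, so level `i` reads bits `y 0, …, y (i-1)`). -/
def C [DecidableEq V] (e : ℕ → V × V) (s : V) : ℕ → V → (ℕ → Bool) → Prop
  | 0, _, _ => False
  | 1, v, y => if e 0 = (s, v) ∧ v ≠ s then y 0 = true else y 0 = false
  | (i+2), v, y =>
      if (e (i+1)).2 = v ∧ v ≠ s then
        (y (i+1) = true ∧ C e s (i+1) (e (i+1)).1 y) ∨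
          (y (i+1) = false ∧ C e s (i+1) v y)
      else y (i+1) = false ∧ C e s (i+1) v y

/-!
Edge indices increase along the path, so `e i`, the edge of largest index, is its last edge.
Removing it leaves a simple path `s → u` on the bits below `i`; when `u = s` that path is
empty, since a simple path never returns to its start.
-/

lemma isPath_append_singleton {e : ℕ → V × V} {s v : V} {l : List ℕ} {i : ℕ} :
    IsPath e s v (l ++ [i]) ↔ IsPath e s (e i).1 l ∧ (e i).2 = v := by
  induction l generalizing s with
  | nil => simp only [List.nil_append, IsPath, eq_comm]
  | cons j t ih => simp only [List.cons_append, IsPath, ih, and_assoc]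

lemma IsPath.mem_targets {e : ℕ → V × V} :
    ∀ {l : List ℕ} {s t : V}, IsPath e s t l → l ≠ [] → t ∈ l.map fun j => (e j).2
  | [], _, _, _, h => absurd rfl h
  | [j], _, _, hp, _ => by simp [hp.2.symm]
  | _ :: c :: r, _, _, hp, _ => List.mem_cons_of_mem _ (hp.2.mem_targets (by simp))

lemma IsSimplePath.eq_nil_of_self {e : ℕ → V × V} {s : V} {l : List ℕ}
    (h : IsSimplePath e s s l) : l = [] := by
  by_contra hl
  exact (List.nodup_cons.1 h.2).1 (h.1.mem_targets hl)

lemma IsSimplePath.of_append_singleton {e : ℕ → V × V} {s v : V} {l : List ℕ} {i : ℕ}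
    (h : IsSimplePath e s v (l ++ [i])) : IsSimplePath e s (e i).1 l := by
  refine ⟨(isPath_append_singleton.1 h.1).1, h.2.sublist ?_⟩
  simp only [List.map_append]
  exact (List.sublist_append_left _ _).cons_cons s

lemma List.IsChain.exists_eq_append_singleton_of_forall_le {l : List ℕ} {i : ℕ}
    (hl : l.IsChain (· < ·)) (hi : i ∈ l) (hmax : ∀ j ∈ l, j ≤ i) :
    ∃ a, l = a ++ [i] ∧ ∀ j ∈ a, j < i := by
  obtain ⟨a, b, rfl⟩ := List.append_of_mem hi
  have hpw := List.pairwise_append.1 (List.isChain_iff_pairwise.1 hl)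
  have hb : b = [] := by
    refine List.eq_nil_iff_forall_not_mem.2 fun c hc => ?_
    have := (List.pairwise_cons.1 hpw.2.1).1 c hc
    have := hmax c (by simp [hc])
    omega
  exact ⟨a, by rw [hb], fun j hj => hpw.2.2 j hj i (by simp)⟩

theorem stmt17_general {V : Type*} (k : ℕ) (e : ℕ → V × V) (s : V)
    (htopo : TopoSorted k e)
    (v : V) (i : ℕ) (hik : i < k) (y : ℕ → Bool)
    (hyi : y i = true)
    (hrep : Represents e s v (i + 1) y) :
    ((e i).1 = s → ∀ j < i, y j = false) ∧
    ((e i).1 ≠ s → Represents e s (e i).1 i y) := by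
  obtain ⟨l, hl, hmem⟩ := hrep
  have hchain := htopo s v l (fun j hj => ((hmem j).1 hj).1.trans_le hik) hl.1
  obtain ⟨a, rfl, hlt⟩ := hchain.exists_eq_append_singleton_of_forall_le
    ((hmem i).2 ⟨i.lt_succ_self, hyi⟩) fun j hj => Nat.le_of_lt_succ ((hmem j).1 hj).1
  have hmem_a : ∀ j, j ∈ a ↔ j < i ∧ y j = true := fun j => by
    refine ⟨fun hj => ⟨hlt j hj, ((hmem j).1 (by simp [hj])).2⟩, fun ⟨hj, hyj⟩ => ?_⟩
    have := (hmem j).2 ⟨by omega, hyj⟩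
    simp only [List.mem_append, List.mem_singleton] at this
    exact this.resolve_right hj.ne
  refine ⟨fun hu j hj => ?_, fun _ => ⟨a, hl.of_append_singleton, hmem_a⟩⟩
  have ha : a = [] := (hu ▸ hl.of_append_singleton).eq_nil_of_self
  by_contra hyj
  simpa [ha] using (hmem_a j).2 ⟨hj, by simpa using hyj⟩

/-- in a topologically edge-ordered DAG with unique source `s`,
if `y` has `y_{i+1} = 1` (0-based: `y i = true`) and its selected edges among
the first `i + 1` form a simple path `s → v` in `D^{i+1}`, then, writing
`e i = (u, v)`: if `u = s` the first `i` bits of `y` are all zero, and if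
`u ≠ s` the edges selected by the first `i` bits form a simple path `s → u`
in `D^i`. -/
theorem stmt17 {V : Type*} (k : ℕ) (e : ℕ → V × V) (s : V)
    (htopo : TopoSorted k e) (hsrc : UniqueSource k e s)
    (v : V) (i : ℕ) (hik : i < k) (y : ℕ → Bool)
    (hyi : y i = true)
    (hrep : Represents e s v (i + 1) y) :
    ((e i).1 = s → ∀ j < i, y j = false) ∧
    ((e i).1 ≠ s → Represents e s (e i).1 i y) :=
  stmt17_general k e s htopo v i hik y hyi hrep
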